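/- In the Orthogonal Vectors reduction, let T = #V₁#V₂#...#V_n# be the concatenation of n binary vectors of dimension d separated by delimiters #, and let P = #U'# where U' is the wildcard-masking of a vector U ∈ {0,1}^d (1 ↦ 0, 0 ↦ ?). Then P matches some substring of T if and only if there exists an index j ∈ [n] such that U and V_j are orthogonal. -/
import Mathlib


/-- Text alphabet for the Orthogonal Vectors reduction: `0`, `1`, and the delimiter `#`. -/
inductive OVSym : Type
  | z : OVSym  -- the symbol 0
  | o : OVSym  -- the symbol 1
  | h : OVSym  -- the delimiter #
deriving DecidableEq

/-- OV reduction, full text: `T = #V₁#V₂#⋯#V_n#` (delimiters `#` exactly at positions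
`j(d+1)`, 0-indexed) and pattern `P = #U'#` where `U'` masks `U` by `1 ↦ 0`, `0 ↦ ?`
(wildcard `?` encoded as `none`). Then `P` matches some substring of `T` iff there is an
index `j` with `U` orthogonal to `V_j`. -/
theorem ov_reduction (d n : ℕ) (U : Fin d → Bool) (V : Fin n → Fin d → Bool)
    (P : ℕ → Option OVSym) (T : ℕ → OVSym)
    (hP0 : P 0 = some OVSym.h) (hPd : P (d + 1) = some OVSym.h)
    (hPmid : ∀ t : Fin d, P (t.val + 1) = if U t then some OVSym.z else none)
    (hTdelim : ∀ j : ℕ, j ≤ n → T (j * (d + 1)) = OVSym.h)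
    (hTmid : ∀ (j : Fin n) (t : Fin d),
      T (j.val * (d + 1) + 1 + t.val) = if V j t then OVSym.o else OVSym.z) :
    (∃ s, s + (d + 2) ≤ n * (d + 1) + 1 ∧
        ∀ t < d + 2, P t = none ∨ P t = some (T (s + t))) ↔
      ∃ j : Fin n, ∀ t : Fin d, ¬(U t = true ∧ V j t = true) := by
  constructor
  · rintro ⟨s, hs, hmatch⟩
    obtain ⟨q, r, hr, hqr⟩ : ∃ q r, r < d + 1 ∧ s = q * (d + 1) + r := by
      refine ⟨s / (d + 1), s % (d + 1), Nat.mod_lt _ (Nat.succ_pos d), ?_⟩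
      have hmod := Nat.div_add_mod s (d + 1)
      rw [Nat.mul_comm]
      omega
    have hq : q < n := by
      rcases Nat.lt_or_ge q n with h | h
      · exact h
      · exfalso
        have := Nat.mul_le_mul_right (d + 1) h
        omega
    have hT0 : T s = OVSym.h := by
      rcases hmatch 0 (by omega) with h | h
      · rw [hP0] at h; exact absurd h (by simp)
      · rw [hP0] at h
        simpa using h.symm
    have hr0 : r = 0 := by
      by_contra hrne
      have ht : r - 1 < d := by omega
      have := hTmid ⟨q, hq⟩ ⟨r - 1, ht⟩
      simp only [Fin.val_mk] at this
      have heq : q * (d + 1) + 1 + (r - 1) = s := by omega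
      rw [heq, hT0] at this
      split at this <;> exact absurd this (by simp)
    refine ⟨⟨q, hq⟩, ?_⟩
    rintro t ⟨hU, hV⟩
    have hm := hmatch (t.val + 1) (by omega)
    rw [hPmid t, hU] at hm
    rw [if_pos rfl] at hm
    rcases hm with h | h
    · exact absurd h (by simp)
    · have hTt := hTmid ⟨q, hq⟩ t
      simp only [Fin.val_mk] at hTt
      have heq : q * (d + 1) + 1 + t.val = s + (t.val + 1) := by omega
      rw [heq] at hTt
      rw [hV, if_pos rfl] at hTt
      rw [hTt] at h
      exact absurd h (by simp)
  · rintro ⟨j, hj⟩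
    have hmul : (j.val + 1) * (d + 1) = j.val * (d + 1) + (d + 1) := Nat.succ_mul _ _
    have hle : (j.val + 1) * (d + 1) ≤ n * (d + 1) := Nat.mul_le_mul_right _ j.isLt
    refine ⟨j.val * (d + 1), by omega, ?_⟩
    intro t ht
    rcases Nat.eq_zero_or_pos t with h0 | hpos
    · subst h0
      right
      rw [hP0, Nat.add_zero, hTdelim j.val (le_of_lt j.isLt)]
    · rcases eq_or_lt_of_le (show t ≤ d + 1 by omega) with hdt | hdt
      · right
        rw [hdt, hPd]
        have : j.val * (d + 1) + (d + 1) = (j.val + 1) * (d + 1) := by omega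
        rw [this, hTdelim (j.val + 1) j.isLt]
      · -- middle: t = u + 1 with u < d
        have hu : t - 1 < d := by omega
        have hP := hPmid ⟨t - 1, hu⟩
        simp only [Fin.val_mk] at hP
        have ht1 : t - 1 + 1 = t := by omega
        rw [ht1] at hP
        cases hU : U ⟨t - 1, hu⟩
        · left; rw [hP, hU]; simp
        · right
          rw [hP, hU, if_pos rfl]
          have hV : V j ⟨t - 1, hu⟩ = false := by
            by_contra hVc
            exact hj ⟨t - 1, hu⟩ ⟨hU, by simpa using hVc⟩
          have hTt := hTmid j ⟨t - 1, hu⟩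
          simp only [Fin.val_mk] at hTt
          have heq : j.val * (d + 1) + 1 + (t - 1) = j.val * (d + 1) + t := by omega
          rw [heq, hV] at hTt
          rw [if_neg (by simp)] at hTt
          rw [hTt]
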